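/- The hyperfield homomorphism η: TC → T, η(z) = log(|z|), is relatively algebraically closed: for every univariate polynomial p over TC and every root b of the push-forward polynomial η_*(p) over T, there exists a ∈ TC with η(a) = b and a a root of p. -/

import Mathlib

open Set
open scoped Classical

/-- The axioms of a (Krasner) hyperfield on a carrier `H`, for a multivalued
addition `add`, multiplication `mul`, additive inverse `neg`, and constants. -/
structure IsHyperfield {H : Type*} (add : H → H → Set H) (mul : H → H → H)
    (neg : H → H) (zero one : H) : Prop where
  add_nonempty : ∀ x y, (add x y).Nonempty
  hadd_comm : ∀ x y, add x y = add y x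
  hadd_assoc : ∀ x y z, (⋃ w ∈ add x y, add w z) = ⋃ w ∈ add y z, add x w
  zero_hadd : ∀ x, add zero x = {x}
  hneg_add : ∀ x, zero ∈ add x (neg x)
  hneg_unique : ∀ x y, zero ∈ add x y → y = neg x
  reversible : ∀ x y z, x ∈ add y z → z ∈ add x (neg y)
  hmul_comm : ∀ x y, mul x y = mul y x
  hmul_assoc : ∀ x y z, mul (mul x y) z = mul x (mul y z)
  one_hmul : ∀ x, mul one x = x
  zero_hmul : ∀ x, mul zero x = zero
  hdistrib : ∀ a x y, (mul a) '' (add x y) = add (mul a x) (mul a y)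
  zero_ne_one : zero ≠ one
  exists_inv : ∀ x, x ≠ zero → ∃ y, mul x y = one

/-- Multivalued hypersum of a list of elements. -/
def hsum {H : Type*} (add : H → H → Set H) (zero : H) : List H → Set H
  | [] => {zero}
  | a :: l => ⋃ b ∈ hsum add zero l, add a b

/-- Powers with respect to a monoid multiplication. -/
def hpow {H : Type*} (mul : H → H → H) (one : H) (a : H) : ℕ → H
  | 0 => one
  | n + 1 => mul a (hpow mul one a n)

/-- Multivalued evaluation of the univariate polynomial `⊞_{i=0}^n c_i ⊙ X^i` at `a`. -/
def evalPoly {H : Type*} (add : H → H → Set H) (mul : H → H → H) (zero one : H)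
    (n : ℕ) (c : ℕ → H) (a : H) : Set H :=
  hsum add zero ((List.range (n + 1)).map fun i => mul (c i) (hpow mul one a i))

/-- Multivalued evaluation of a multivariate polynomial given by a list of
terms (coefficient, exponent vector) at a point `x`. -/
def evalMPoly {H : Type*} (add : H → H → Set H) (mul : H → H → H) (zero one : H)
    {n : ℕ} (terms : List (H × (Fin n → ℕ))) (x : Fin n → H) : Set H :=
  hsum add zero (terms.map fun t =>
    mul t.1 ((List.ofFn fun j => hpow mul one (x j) (t.2 j)).foldr mul one))

/-- Hyperfield homomorphism axioms. -/
structure IsHyperfieldHom {H1 H2 : Type*}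
    (add1 : H1 → H1 → Set H1) (mul1 : H1 → H1 → H1) (zero1 one1 : H1)
    (add2 : H2 → H2 → Set H2) (mul2 : H2 → H2 → H2) (zero2 one2 : H2)
    (f : H1 → H2) : Prop where
  map_zero : f zero1 = zero2
  map_one : f one1 = one2
  map_mul : ∀ x y, f (mul1 x y) = mul2 (f x) (f y)
  map_add : ∀ x y, f '' (add1 x y) ⊆ add2 (f x) (f y)

/-- `f` is relatively algebraically closed: every root of the coefficientwise
push-forward of a univariate polynomial lifts through `f` to a root. -/
def IsRAC {H1 H2 : Type*}
    (add1 : H1 → H1 → Set H1) (mul1 : H1 → H1 → H1) (zero1 one1 : H1)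
    (add2 : H2 → H2 → Set H2) (mul2 : H2 → H2 → H2) (zero2 one2 : H2)
    (f : H1 → H2) : Prop :=
  ∀ (n : ℕ) (c : ℕ → H1) (b : H2),
    zero2 ∈ evalPoly add2 mul2 zero2 one2 n (fun i => f (c i)) b →
    ∃ a : H1, f a = b ∧ zero1 ∈ evalPoly add1 mul1 zero1 one1 n c a

/-- Tropical hyperaddition on `ℝ ∪ {-∞}`. -/
noncomputable def Tadd (x y : WithBot ℝ) : Set (WithBot ℝ) :=
  if x = y then {z | z ≤ x} else {max x y}

/-- Tropical multiplication: addition of extended reals. -/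
noncomputable def Tmul (x y : WithBot ℝ) : WithBot ℝ := x + y

/-- Hyperaddition of the tropical complex hyperfield `TC` on `ℂ`. -/
noncomputable def TCadd (z w : ℂ) : Set ℂ :=
  if w = -z then {c | ‖c‖ ≤ ‖z‖}
  else if ‖w‖ < ‖z‖ then {z}
  else if ‖z‖ < ‖w‖ then {w}
  else {c | ∃ t : ℝ, 0 ≤ t ∧ t ≤ 1 ∧
    c = ((‖z‖ / ‖(t : ℂ) * z + (1 - (t : ℂ)) * w‖ : ℝ) : ℂ) *
      ((t : ℂ) * z + (1 - (t : ℂ)) * w)}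

/-- The homomorphism `η(z) = log |z|` from `TC` to the tropical hyperfield. -/
noncomputable def eta (z : ℂ) : WithBot ℝ :=
  if z = 0 then ⊥ else ((Real.log ‖z‖ : ℝ) : WithBot ℝ)

/-- Hyperaddition of the hyperfield of signs. -/
noncomputable def Sadd (x y : SignType) : Set SignType :=
  if x = 0 then {y} else if y = 0 then {x} else if x = y then {x} else Set.univ

/-- Hyperaddition of the Krasner hyperfield on `Bool` (`false = 0`, `true = 1`). -/
def Kadd (x y : Bool) : Set Bool :=
  if x = false then {y} else if y = false then {x} else Set.univ

/-- `c ∈ (X ⊞ -a) ⊙ d` : the coefficients `c` arise from multiplying the linear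
factor `X ⊞ (-a)` with the polynomial with coefficients `d`. -/
def LinFactor {H : Type*} (add : H → H → Set H) (mul : H → H → H) (zero : H)
    (neg : H → H) (a : H) (c d : ℕ → H) : Prop :=
  ∀ i, c i ∈ add (if i = 0 then zero else d (i - 1)) (mul (neg a) (d i))

/-- `MultGe … a n c k` : the multiplicity of `a` as a root of the degree-`n`
polynomial with coefficients `c` is at least `k` (recursive peeling of linear factors). -/
def MultGe {H : Type*} (add : H → H → Set H) (mul : H → H → H) (zero one : H)
    (neg : H → H) (a : H) : ℕ → (ℕ → H) → ℕ → Prop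
  | _, _, 0 => True
  | n, c, k + 1 => zero ∈ evalPoly add mul zero one n c a ∧
      ∃ d : ℕ → H, (∀ i, n ≤ i → d i = zero) ∧ LinFactor add mul zero neg a c d ∧
        MultGe add mul zero one neg a (n - 1) d k

/-- The multiplicity of `a` as a root. -/
noncomputable def hmult {H : Type*} (add : H → H → Set H) (mul : H → H → H)
    (zero one : H) (neg : H → H) (n : ℕ) (c : ℕ → H) (a : H) : ℕ :=
  sSup {k | MultGe add mul zero one neg a n c k}

/-- The multiplicity bound: the sum of root multiplicities is at most the degree. -/
def MultBound {H : Type*} (add : H → H → Set H) (mul : H → H → H)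
    (zero one : H) (neg : H → H) : Prop :=
  ∀ (n : ℕ) (c : ℕ → H), c n ≠ zero →
    ∀ S : Finset H, (S.sum fun a => hmult add mul zero one neg n c a) ≤ n

/-- The multiplicity equality: the sum of root multiplicities equals the degree. -/
def MultEq {H : Type*} (add : H → H → Set H) (mul : H → H → H)
    (zero one : H) (neg : H → H) : Prop :=
  MultBound add mul zero one neg ∧
    ∀ (n : ℕ) (c : ℕ → H), c n ≠ zero →
      ∃ S : Finset H, (S.sum fun a => hmult add mul zero one neg n c a) = n

/-- Iterated splitting off of a list of linear factors: `c ∈ (X ⊞ -a₁) ⊙ ⋯ ⊙ (X ⊞ -aₘ) ⊙ d`. -/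
def MultiLinFactor {H : Type*} (add : H → H → Set H) (mul : H → H → H) (zero : H)
    (neg : H → H) : List H → (ℕ → H) → (ℕ → H) → Prop
  | [], c, d => c = d
  | a :: l, c, d => ∃ e : ℕ → H, LinFactor add mul zero neg a c e ∧
      MultiLinFactor add mul zero neg l e d

/-- The inheritance property: any sub-multiset of the multiset of roots (with
multiplicity) of size at most the degree can be split off as linear factors. -/
def Inheritance {H : Type*} (add : H → H → Set H) (mul : H → H → H)
    (zero one : H) (neg : H → H) : Prop :=
  ∀ (n : ℕ) (c : ℕ → H), c n ≠ zero →
    ∀ l : List H, l.length ≤ n →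
      (∀ a : H, (l.filter fun x => x = a).length ≤ hmult add mul zero one neg n c a) →
      ∃ q : ℕ → H, MultiLinFactor add mul zero neg l c q

/-! Lift `b` to any `a₀` with `η a₀ = b`. As `η` is multiplicative, the tropical terms are the
images `η (cᵢ a₀ⁱ)` of the complex terms. A tropical hypersum contains `-∞` only if all its terms
are `-∞` or its maximum is attained twice, say at `j < k`. In the first case all complex terms
vanish and `0` is a root. In the second, rotating `a₀` by a unit `u` with
`u ^ (k - j) = -cⱼ a₀ʲ / (cₖ a₀ᵏ)` changes neither `η` nor the norms of the terms but makes the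
terms `j` and `k` antipodal; a `TC`-hypersum containing two antipodal terms of maximal norm `r`
is the whole disc of radius `r`, so it contains `0`. -/

open scoped List

lemma mem_hsum_cons {H : Type*} {add : H → H → Set H} {zero a c : H} {l : List H} :
    c ∈ hsum add zero (a :: l) ↔ ∃ w ∈ hsum add zero l, c ∈ add a w := by
  simp [hsum]

lemma hpow_eq_pow {M : Type*} [Monoid M] (a : M) (i : ℕ) : hpow (· * ·) 1 a i = a ^ i := by
  induction i with
  | zero => rw [hpow, pow_zero]
  | succ i ih => rw [hpow, ih, pow_succ']

lemma evalPoly_eq_hsum {M : Type*} [Monoid M] (add : M → M → Set M) (zero : M) (n : ℕ)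
    (c : ℕ → M) (a : M) :
    evalPoly add (· * ·) zero 1 n c a =
      hsum add zero ((List.range (n + 1)).map fun i => c i * a ^ i) := by
  simp only [evalPoly, hpow_eq_pow]

lemma evalPoly_map {M H : Type*} [Monoid M] {add : H → H → Set H} {mul : H → H → H}
    {zero one : H} {f : M → H} (map_one : f 1 = one)
    (map_mul : ∀ x y, f (x * y) = mul (f x) (f y)) (n : ℕ) (c : ℕ → M) (a : M) :
    evalPoly add mul zero one n (fun i => f (c i)) (f a) =
      hsum add zero (((List.range (n + 1)).map fun i => c i * a ^ i).map f) := by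
  have hpow_map : ∀ i, hpow mul one (f a) i = f (a ^ i) := by
    intro i
    induction i with
    | zero => rw [hpow, pow_zero, map_one]
    | succ i ih => rw [hpow, ih, ← map_mul, pow_succ']
  simp only [evalPoly, List.map_map, Function.comp_def, hpow_map, map_mul]

lemma pair_sublist_map_range_iff {α : Type*} {f : ℕ → α} {m : ℕ} {x y : α} :
    [x, y] <+ (List.range m).map f ↔ ∃ j k, j < k ∧ k < m ∧ f j = x ∧ f k = y := by
  rw [List.sublist_map_iff]
  constructor
  · rintro ⟨l, hl, hxy⟩
    obtain ⟨j, l, rfl, hj, hl'⟩ := List.map_eq_cons_iff.1 hxy.symm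
    obtain ⟨k, l, rfl, hk, -⟩ := List.map_eq_cons_iff.1 hl'
    have hjk : j < k :=
      List.rel_of_pairwise_cons (List.pairwise_lt_range.sublist hl) List.mem_cons_self
    exact ⟨j, k, hjk, List.mem_range.1 (hl.subset (by simp)), hj, hk⟩
  · rintro ⟨j, k, hjk, hkm, rfl, rfl⟩
    refine ⟨[j, k], ?_, rfl⟩
    calc [j, k] <+ List.range k ++ [k] :=
          (List.singleton_sublist.2 (List.mem_range.2 hjk)).append (List.Sublist.refl _)
      _ = List.range (k + 1) := List.range_succ.symm
      _ <+ List.range m := List.range_sublist.2 hkm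

lemma mem_Tadd {x y v : WithBot ℝ} : v ∈ Tadd x y ↔ if x = y then v ≤ x else v = max x y := by
  unfold Tadd; split_ifs <;> rfl

lemma mem_hsum_Tadd {L : List (WithBot ℝ)} {v : WithBot ℝ} (hv : v ∈ hsum Tadd ⊥ L) :
    ((v ∈ L ∨ v = ⊥) ∧ ∀ x ∈ L, x ≤ v) ∨ ∃ d, [d, d] <+ L ∧ v ≤ d ∧ ∀ x ∈ L, x ≤ d := by
  induction L generalizing v with
  | nil => exact Or.inl ⟨Or.inr hv, by simp⟩
  | cons a L ih =>
    obtain ⟨w, hw, hvw⟩ := mem_hsum_cons.1 hv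
    rw [mem_Tadd] at hvw
    split_ifs at hvw with haw
    · subst haw
      rcases ih hw with ⟨hw | rfl, hmax⟩ | ⟨d, hd, had, hmax⟩
      · refine Or.inr ⟨a, List.cons_sublist_cons.2 (List.singleton_sublist.2 hw), hvw, ?_⟩
        simpa using hmax
      · exact Or.inl ⟨Or.inr (le_bot_iff.1 hvw), by simpa [le_bot_iff.1 hvw] using hmax⟩
      · exact Or.inr ⟨d, hd.cons a, hvw.trans had, by simpa [had] using hmax⟩
    · subst hvw
      rcases ih hw with ⟨hw', hmax⟩ | ⟨d, hd, hwd, hmax⟩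
      · refine Or.inl ⟨?_, ?_⟩
        · rcases max_choice a w with h | h <;> rw [h]
          · exact Or.inl List.mem_cons_self
          · exact hw'.imp_left (List.mem_cons_of_mem a)
        · simpa using fun x hx => (hmax x hx).trans (le_max_right a w)
      · rcases le_or_gt a d with had | hda
        · exact Or.inr ⟨d, hd.cons a, max_le had hwd, by simpa [had] using hmax⟩
        · refine Or.inl ⟨Or.inl (by simp [max_eq_left (hwd.trans hda.le)]), ?_⟩
          simpa [max_eq_left (hwd.trans hda.le)] using fun x hx => (hmax x hx).trans hda.le

lemma bot_mem_hsum_Tadd {L : List (WithBot ℝ)} (h : ⊥ ∈ hsum Tadd ⊥ L) :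
    (∀ x ∈ L, x = ⊥) ∨ ∃ d, [d, d] <+ L ∧ ∀ x ∈ L, x ≤ d := by
  rcases mem_hsum_Tadd h with ⟨-, hbot⟩ | ⟨d, hd, -, hmax⟩
  · exact Or.inl fun x hx => le_bot_iff.1 (hbot x hx)
  · exact Or.inr ⟨d, hd, hmax⟩

lemma TCadd_neg_self (z : ℂ) : TCadd z (-z) = {c | ‖c‖ ≤ ‖z‖} := by
  rw [TCadd, if_pos rfl]

lemma left_mem_TCadd {z w : ℂ} (h : ‖w‖ ≤ ‖z‖) : z ∈ TCadd z w := by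
  unfold TCadd
  split_ifs with hneg hlt hgt
  · exact le_refl ‖z‖
  · rfl
  · exact absurd h (not_le.2 hgt)
  · have hz : z ≠ 0 := by rintro rfl; exact hneg (by simpa using h)
    refine ⟨1, zero_le_one, le_rfl, ?_⟩
    simp [div_self (norm_ne_zero_iff.2 hz)]

lemma right_mem_TCadd {z w : ℂ} (h : ‖z‖ ≤ ‖w‖) : w ∈ TCadd z w := by
  unfold TCadd
  split_ifs with hneg hlt hgt
  · simp [hneg]
  · exact absurd h (not_le.2 hlt)
  · rfl
  · have hzw : ‖z‖ = ‖w‖ := le_antisymm h (not_lt.1 hgt)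
    have hw : w ≠ 0 := by rintro rfl; exact hneg (by simpa using hzw)
    refine ⟨0, le_rfl, zero_le_one, ?_⟩
    simp [hzw, div_self (norm_ne_zero_iff.2 hw)]

lemma exists_mem_hsum_TCadd_norm_le {L : List ℂ} {M : ℝ} (hM : 0 ≤ M)
    (hL : ∀ x ∈ L, ‖x‖ ≤ M) : ∃ w ∈ hsum TCadd 0 L, ‖w‖ ≤ M := by
  induction L with
  | nil => exact ⟨0, rfl, by simpa using hM⟩
  | cons a L ih =>
    obtain ⟨w, hw, hwM⟩ := ih fun x hx => hL x (List.mem_cons_of_mem a hx)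
    rcases le_total ‖w‖ ‖a‖ with h | h
    · exact ⟨a, mem_hsum_cons.2 ⟨w, hw, left_mem_TCadd h⟩, hL a List.mem_cons_self⟩
    · exact ⟨w, mem_hsum_cons.2 ⟨w, hw, right_mem_TCadd h⟩, hwM⟩

lemma mem_hsum_TCadd_of_norm_le {L : List ℂ} {x : ℂ} (hx : x ∈ L)
    (hmax : ∀ y ∈ L, ‖y‖ ≤ ‖x‖) : x ∈ hsum TCadd 0 L := by
  induction L with
  | nil => simp at hx
  | cons a L ih =>
    rcases List.mem_cons.1 hx with rfl | hx
    · obtain ⟨w, hw, hwx⟩ := exists_mem_hsum_TCadd_norm_le (norm_nonneg x)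
        fun y hy => hmax y (List.mem_cons_of_mem x hy)
      exact mem_hsum_cons.2 ⟨w, hw, left_mem_TCadd hwx⟩
    · refine mem_hsum_cons.2 ⟨x, ih hx fun y hy => hmax y (List.mem_cons_of_mem a hy), ?_⟩
      exact right_mem_TCadd (hmax a List.mem_cons_self)

lemma mem_hsum_TCadd_of_pair_sublist {L : List ℂ} {z : ℂ} (hz : [z, -z] <+ L)
    (hmax : ∀ y ∈ L, ‖y‖ ≤ ‖z‖) {c : ℂ} (hc : ‖c‖ ≤ ‖z‖) : c ∈ hsum TCadd 0 L := by
  induction L generalizing c with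
  | nil => simp at hz
  | cons a L ih =>
    have hmaxL : ∀ y ∈ L, ‖y‖ ≤ ‖z‖ := fun y hy => hmax y (List.mem_cons_of_mem a hy)
    rcases List.sublist_cons_iff.1 hz with hz | ⟨r, hr, hzr⟩
    · rcases le_or_gt ‖c‖ ‖a‖ with hca | hac
      · have ha : -a ∈ hsum TCadd 0 L := ih hz hmaxL (by simpa using hmax a List.mem_cons_self)
        exact mem_hsum_cons.2 ⟨-a, ha, by rw [TCadd_neg_self]; exact hca⟩
      · exact mem_hsum_cons.2 ⟨c, ih hz hmaxL hc, right_mem_TCadd hac.le⟩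
    · obtain ⟨rfl, rfl⟩ := List.cons_eq_cons.1 hr
      have hneg : -z ∈ hsum TCadd 0 L :=
        mem_hsum_TCadd_of_norm_le (List.singleton_sublist.1 hzr) (by simpa using hmaxL)
      exact mem_hsum_cons.2 ⟨-z, hneg, by rw [TCadd_neg_self]; exact hc⟩

lemma exists_norm_eq_one_mul_pow_eq_neg {z w : ℂ} (h : ‖z‖ = ‖w‖) {j k : ℕ} (hjk : j < k) :
    ∃ u : ℂ, ‖u‖ = 1 ∧ w * u ^ k = -(z * u ^ j) := by
  rcases eq_or_ne w 0 with rfl | hw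
  · exact ⟨1, norm_one, by simp [norm_eq_zero.1 (h.trans norm_zero)]⟩
  obtain ⟨u, hu⟩ := IsAlgClosed.exists_pow_nat_eq (-z / w) (Nat.sub_pos_of_lt hjk)
  have hu1 : ‖u‖ = 1 := by
    have : ‖u‖ ^ (k - j) = 1 := by
      rw [← norm_pow, hu, norm_div, norm_neg, h, div_self (norm_ne_zero_iff.2 hw)]
    exact (pow_eq_one_iff_of_nonneg (norm_nonneg u) (Nat.sub_ne_zero_of_lt hjk)).1 this
  refine ⟨u, hu1, ?_⟩
  rw [← Nat.add_sub_cancel' hjk.le, pow_add, hu]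
  field_simp

lemma eta_zero : eta 0 = ⊥ := if_pos rfl

lemma eta_of_ne_zero {z : ℂ} (hz : z ≠ 0) : eta z = (Real.log ‖z‖ : WithBot ℝ) := if_neg hz

lemma eta_eq_bot_iff {z : ℂ} : eta z = ⊥ ↔ z = 0 := by
  rcases eq_or_ne z 0 with rfl | hz
  · simp [eta_zero]
  · simp [eta_of_ne_zero hz, hz]

lemma eta_le_eta_iff {z w : ℂ} : eta z ≤ eta w ↔ ‖z‖ ≤ ‖w‖ := by
  rcases eq_or_ne z 0 with rfl | hz
  · simp [eta_zero]
  rcases eq_or_ne w 0 with rfl | hw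
  · simp [eta_zero, eta_of_ne_zero hz, hz]
  rw [eta_of_ne_zero hz, eta_of_ne_zero hw, WithBot.coe_le_coe,
    Real.log_le_log_iff (norm_pos_iff.2 hz) (norm_pos_iff.2 hw)]

lemma eta_eq_eta_iff {z w : ℂ} : eta z = eta w ↔ ‖z‖ = ‖w‖ := by
  simp only [le_antisymm_iff, eta_le_eta_iff]

lemma eta_one : eta 1 = 0 := by simp [eta_of_ne_zero one_ne_zero]

lemma eta_mul (z w : ℂ) : eta (z * w) = Tmul (eta z) (eta w) := by
  rcases eq_or_ne z 0 with rfl | hz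
  · simp [eta_zero, Tmul]
  rcases eq_or_ne w 0 with rfl | hw
  · simp [eta_zero, Tmul]
  rw [eta_of_ne_zero (mul_ne_zero hz hw), eta_of_ne_zero hz, eta_of_ne_zero hw, Tmul, norm_mul,
    Real.log_mul (norm_ne_zero_iff.2 hz) (norm_ne_zero_iff.2 hw), WithBot.coe_add]

lemma eta_surjective : Function.Surjective eta := by
  intro b
  induction b with
  | bot => exact ⟨0, eta_zero⟩
  | coe r =>
    refine ⟨Real.exp r, ?_⟩
    rw [eta_of_ne_zero (by exact_mod_cast (Real.exp_pos r).ne'), Complex.norm_real,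
      Real.norm_of_nonneg (Real.exp_pos r).le, Real.log_exp]

/-- The hyperfield homomorphism `η : TC → T`, `η(z) = log |z|`, is
relatively algebraically closed. -/
theorem eta_isRAC :
    IsRAC TCadd (· * ·) (0 : ℂ) (1 : ℂ) Tadd Tmul ⊥ (0 : WithBot ℝ) eta := by
  intro n c b hb
  obtain ⟨a₀, rfl⟩ := eta_surjective b
  rw [evalPoly_map eta_one eta_mul, List.map_map] at hb
  simp only [evalPoly_eq_hsum]
  set T₀ : ℕ → ℂ := fun i => c i * a₀ ^ i
  rcases bot_mem_hsum_Tadd hb with hzero | ⟨d, hdd, hmax⟩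
  · have hT₀ : ∀ i < n + 1, T₀ i = 0 := fun i hi =>
      eta_eq_bot_iff.1 (hzero _ (List.mem_map_of_mem (List.mem_range.2 hi)))
    refine ⟨a₀, rfl, mem_hsum_TCadd_of_norm_le
      (L := (List.range (n + 1)).map T₀) (x := 0) ?_ ?_⟩
    · exact List.mem_map.2 ⟨0, by simp, hT₀ 0 n.succ_pos⟩
    · intro y hy
      obtain ⟨i, hi, rfl⟩ := List.mem_map.1 hy
      rw [hT₀ i (List.mem_range.1 hi)]
  · obtain ⟨j, k, hjk, hkn, rfl, hkj⟩ := pair_sublist_map_range_iff.1 hdd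
    have hnorm : ∀ i < n + 1, ‖T₀ i‖ ≤ ‖T₀ j‖ := fun i hi =>
      eta_le_eta_iff.1 (hmax _ (List.mem_map_of_mem (List.mem_range.2 hi)))
    obtain ⟨u, hu, hanti⟩ := exists_norm_eq_one_mul_pow_eq_neg (eta_eq_eta_iff.1 hkj.symm) hjk
    have hrot : ∀ i, c i * (a₀ * u) ^ i = T₀ i * u ^ i := fun i => by simp only [T₀]; ring
    refine ⟨a₀ * u, eta_eq_eta_iff.2 (by simp [hu]), ?_⟩
    simp only [hrot]
    refine mem_hsum_TCadd_of_pair_sublist (pair_sublist_map_range_iff.2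
      ⟨j, k, hjk, hkn, rfl, hanti⟩) ?_ (norm_zero.trans_le (norm_nonneg _))
    simpa [hu] using hnorm
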